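/- arXiv:0806.1785 — 5 statements merged into one kernel-verified Lean document; each statement's English description precedes it below -/
import Mathlib

section
/- With L(k, k̇, t) = ½‖k ṙ_T - k̇ α‖², where α(t) = r_P - r_T(t), the Euler-Lagrange equation ∂L/∂k - d/dt(∂L/∂k̇) = 0 is equivalent to k̈⟨α,α⟩ + 2k̇⟨α̇,α⟩ + k⟨α̈,α⟩ = 0, i.e. ⟨(d²/dt²)(kα), α⟩ = 0. -/
/-!
Write `g = k • α`, so that `ġ = k α̇ + k̇ α = -(k ṙ_T - k̇ α)` because `α̇ = -ṙ_T`. Then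
`∂L/∂k = ⟪ġ, α̇⟫` and `∂L/∂k̇ = ⟪ġ, α⟫`, whose time derivative is `⟪g̈, α⟫ + ⟪ġ, α̇⟫`; hence the
Euler–Lagrange residual is `-⟪g̈, α⟫`, and the Leibniz rule
`g̈ = k̈ α + 2 k̇ α̇ + k α̈` expands it.
-/

open RealInnerProductSpace

section SecondDerivSmul

variable {E : Type*} [NormedAddCommGroup E] [NormedSpace ℝ E] {k : ℝ → ℝ} {α : ℝ → E} {t : ℝ}

theorem hasDerivAt_deriv_smul (hk : Differentiable ℝ k) (hα : Differentiable ℝ α)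
    (hk' : DifferentiableAt ℝ (deriv k) t) (hα' : DifferentiableAt ℝ (deriv α) t) :
    HasDerivAt (deriv fun s => k s • α s)
      (deriv (deriv k) t • α t + (2 * deriv k t) • deriv α t + k t • deriv (deriv α) t) t := by
  have hderiv : deriv (fun s => k s • α s) = k • deriv α + deriv k • α :=
    funext fun s => deriv_smul (hk s) (hα s)
  rw [hderiv]
  exact ((hk t).hasDerivAt.smul hα'.hasDerivAt |>.add
    (hk'.hasDerivAt.smul (hα t).hasDerivAt)).congr_deriv (by module)

end SecondDerivSmul

section InnerProduct

variable {E : Type*} [NormedAddCommGroup E] [InnerProductSpace ℝ E] {k : ℝ → ℝ} {α : ℝ → E}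
  {t : ℝ}

theorem inner_deriv_deriv_smul_self (hk : Differentiable ℝ k) (hα : Differentiable ℝ α)
    (hk' : DifferentiableAt ℝ (deriv k) t) (hα' : DifferentiableAt ℝ (deriv α) t) :
    ⟪deriv (deriv fun s => k s • α s) t, α t⟫ =
      deriv (deriv k) t * ⟪α t, α t⟫ + 2 * (deriv k t * ⟪deriv α t, α t⟫)
        + k t * ⟪deriv (deriv α) t, α t⟫ := by
  rw [(hasDerivAt_deriv_smul hk hα hk' hα').deriv]
  simp only [inner_add_left, real_inner_smul_left]
  ring

theorem inner_deriv_smul_sub_deriv_inner (hk : Differentiable ℝ k) (hα : Differentiable ℝ α)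
    (hk' : DifferentiableAt ℝ (deriv k) t) (hα' : DifferentiableAt ℝ (deriv α) t) :
    ⟪deriv (fun s => k s • α s) t, deriv α t⟫
        - deriv (fun s => ⟪deriv (fun u => k u • α u) s, α s⟫) t =
      -⟪deriv (deriv fun s => k s • α s) t, α t⟫ := by
  have hg' := hasDerivAt_deriv_smul hk hα hk' hα'
  rw [(hg'.inner ℝ (hα t).hasDerivAt).deriv, hg'.deriv]
  ring

end InnerProduct

theorem euler_lagrange_motion_camouflage
    (rT : ℝ → EuclideanSpace ℝ (Fin 3)) (rP : EuclideanSpace ℝ (Fin 3))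
    (k : ℝ → ℝ)
    (hk : Differentiable ℝ k) (hk' : Differentiable ℝ (deriv k))
    (hT : Differentiable ℝ rT) (hT' : Differentiable ℝ (deriv rT))
    (α : ℝ → EuclideanSpace ℝ (Fin 3)) (hα : ∀ t, α t = rP - rT t)
    -- ∂L/∂k where L = ½‖k ṙ_T - k̇ α‖²
    (dLdk : ℝ → ℝ)
    (hdLdk : ∀ t, dLdk t = ⟪k t • deriv rT t - deriv k t • α t, deriv rT t⟫)
    -- ∂L/∂k̇
    (dLdk' : ℝ → ℝ)
    (hdLdk' : ∀ t, dLdk' t = ⟪k t • deriv rT t - deriv k t • α t, -α t⟫)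
    (t : ℝ) :
    (dLdk t - deriv dLdk' t = 0 ↔
      deriv (deriv k) t * ⟪α t, α t⟫ + 2 * (deriv k t * ⟪deriv α t, α t⟫)
        + k t * ⟪deriv (deriv α) t, α t⟫ = 0) ∧
    (deriv (deriv k) t * ⟪α t, α t⟫ + 2 * (deriv k t * ⟪deriv α t, α t⟫)
        + k t * ⟪deriv (deriv α) t, α t⟫ = 0 ↔
      ⟪deriv (deriv (fun s => k s • α s)) t, α t⟫ = 0) := by
  have hα_eq : α = fun s => rP - rT s := funext hα
  have hα_diff : Differentiable ℝ α := hα_eq ▸ hT.const_sub rP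
  have hα_deriv : deriv α = fun s => -deriv rT s := hα_eq ▸ deriv_const_sub' rP
  have hα_deriv_diff : DifferentiableAt ℝ (deriv α) t := hα_deriv ▸ (hT' t).neg
  have hvelocity : ∀ s, k s • deriv rT s - deriv k s • α s = -deriv (fun u => k u • α u) s := by
    intro s
    rw [deriv_fun_smul (hk s) (hα_diff s), hα_deriv]
    module
  have hdLdk_eq : dLdk t = ⟪deriv (fun u => k u • α u) t, deriv α t⟫ := by
    rw [hdLdk, hvelocity, hα_deriv, inner_neg_left, ← inner_neg_right]
  have hdLdk'_eq : dLdk' = fun s => ⟪deriv (fun u => k u • α u) s, α s⟫ :=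
    funext fun s => by rw [hdLdk', hvelocity, inner_neg_neg]
  rw [hdLdk_eq, hdLdk'_eq, inner_deriv_smul_sub_deriv_inner hk hα_diff (hk' t) hα_deriv_diff,
    neg_eq_zero, inner_deriv_deriv_smul_self hk hα_diff (hk' t) hα_deriv_diff]
  exact ⟨Iff.rfl, Iff.rfl⟩
end

section
/- If both d²/dt²(k r_T) = r_T Ω² and the quasi-3D condition d²/dt²(r_T(1-k)) = r_T(1-k)Ω² hold, with Ω² = (1/(k r_T))·d²/dt²(k r_T) and k r_T ≠ 0, then k̈ r_T + 2k̇ ṙ_T = 0. -/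
/-!
Write `F = k r_T` and `G = r_T (1 - k)`, so that `F + G = r_T` and hence `G̈ = r̈_T - F̈`.
The definition of `Ω²` gives `F̈ = k r_T Ω²`, and the quasi-3D condition then reads
`r̈_T = F̈ + (1 - k) r_T Ω²`. Expanding `F̈ = k̈ r_T + 2 k̇ ṙ_T + k r̈_T` by the Leibniz rule,
`k̈ r_T + 2 k̇ ṙ_T = F̈ - k r̈_T = (1 - k) (F̈ - k r_T Ω²) = 0`.
-/

section SecondDerivative

variable {𝕜 : Type*} [NontriviallyNormedField 𝕜] {f g : 𝕜 → 𝕜} {x : 𝕜}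

theorem deriv_fun_mul_of_differentiable (hf : Differentiable 𝕜 f) (hg : Differentiable 𝕜 g) :
    deriv (fun s => f s * g s) = fun s => deriv f s * g s + f s * deriv g s :=
  funext fun s => deriv_fun_mul (hf s) (hg s)

theorem deriv_deriv_fun_mul (hf : Differentiable 𝕜 f) (hg : Differentiable 𝕜 g)
    (hf' : DifferentiableAt 𝕜 (deriv f) x) (hg' : DifferentiableAt 𝕜 (deriv g) x) :
    deriv (deriv fun s => f s * g s) x =
      deriv (deriv f) x * g x + 2 * deriv f x * deriv g x + f x * deriv (deriv g) x := by
  rw [deriv_fun_mul_of_differentiable hf hg,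
    deriv_fun_add (hf'.fun_mul (hg x)) ((hf x).fun_mul hg'),
    deriv_fun_mul hf' (hg x), deriv_fun_mul (hf x) hg']
  ring

theorem differentiableAt_deriv_fun_mul (hf : Differentiable 𝕜 f) (hg : Differentiable 𝕜 g)
    (hf' : DifferentiableAt 𝕜 (deriv f) x) (hg' : DifferentiableAt 𝕜 (deriv g) x) :
    DifferentiableAt 𝕜 (deriv fun s => f s * g s) x := by
  rw [deriv_fun_mul_of_differentiable hf hg]
  exact (hf'.fun_mul (hg x)).fun_add ((hf x).fun_mul hg')

theorem deriv_deriv_fun_sub (hf : Differentiable 𝕜 f) (hg : Differentiable 𝕜 g)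
    (hf' : DifferentiableAt 𝕜 (deriv f) x) (hg' : DifferentiableAt 𝕜 (deriv g) x) :
    deriv (deriv fun s => f s - g s) x = deriv (deriv f) x - deriv (deriv g) x := by
  rw [show deriv (fun s => f s - g s) = fun s => deriv f s - deriv g s from
    funext fun s => deriv_fun_sub (hf s) (hg s), deriv_fun_sub hf' hg']

end SecondDerivative

theorem quasi3D_derivation_general
    (I : Set ℝ)
    (rT k : ℝ → ℝ)
    (hrT : Differentiable ℝ rT) (hrT' : Differentiable ℝ (deriv rT))
    (hk : Differentiable ℝ k) (hk' : Differentiable ℝ (deriv k))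
    (hne : ∀ t ∈ I, k t * rT t ≠ 0)
    (Ω2 : ℝ → ℝ)
    (hΩ2 : ∀ t ∈ I, Ω2 t = deriv (deriv (fun s => k s * rT s)) t / (k t * rT t))
    (h2 : ∀ t ∈ I, deriv (deriv (fun s => rT s * (1 - k s))) t
            = rT t * (1 - k t) * Ω2 t) :
    ∀ t ∈ I, deriv (deriv k) t * rT t + 2 * deriv k t * deriv rT t = 0 := by
  intro t ht
  have hleibniz := deriv_deriv_fun_mul hk hrT (hk' t) (hrT' t)
  have hF : deriv (deriv fun s => k s * rT s) t = Ω2 t * (k t * rT t) :=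
    (div_eq_iff (hne t ht)).mp (hΩ2 t ht).symm
  have hG : deriv (deriv fun s => rT s * (1 - k s)) t
      = deriv (deriv rT) t - deriv (deriv fun s => k s * rT s) t := by
    have hsplit : (fun s => rT s * (1 - k s)) = fun s => rT s - k s * rT s := by
      funext s; ring
    exact hsplit ▸ deriv_deriv_fun_sub hrT (hk.fun_mul hrT) (hrT' t)
      (differentiableAt_deriv_fun_mul hk hrT (hk' t) (hrT' t))
  have hquasi := hG.symm.trans (h2 t ht)
  linear_combination -hleibniz + (1 - k t) * hF - k t * hquasi

theorem quasi3D_derivation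
    (I : Set ℝ)
    (rT k : ℝ → ℝ)
    (hrT : Differentiable ℝ rT) (hrT' : Differentiable ℝ (deriv rT))
    (hk : Differentiable ℝ k) (hk' : Differentiable ℝ (deriv k))
    (hne : ∀ t ∈ I, k t * rT t ≠ 0)
    (Ω2 : ℝ → ℝ)
    (hΩ2 : ∀ t ∈ I, Ω2 t = deriv (deriv (fun s => k s * rT s)) t / (k t * rT t))
    (h1 : ∀ t ∈ I, deriv (deriv (fun s => k s * rT s)) t = rT t * Ω2 t)
    (h2 : ∀ t ∈ I, deriv (deriv (fun s => rT s * (1 - k s))) t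
            = rT t * (1 - k t) * Ω2 t) :
    ∀ t ∈ I, deriv (deriv k) t * rT t + 2 * deriv k t * deriv rT t = 0 :=
  quasi3D_derivation_general I rT k hrT hrT' hk hk' hne Ω2 hΩ2 h2
end

section
/- If the target's tangential acceleration a_T = r_T θ̈ + 2ṙ_T θ̇ vanishes (a_T = 0) and k ≠ 1, then the MCPN pursuer tangential acceleration is a_D = 2(k̇ r/(1-k))θ̇, where r = r_T(1-k) is the relative range between pursuer and target. -/
theorem mcpn_constant_velocity_target
    (rT k θ : ℝ → ℝ)
    (hrT : Differentiable ℝ rT) (hrT' : Differentiable ℝ (deriv rT))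
    (hk : Differentiable ℝ k) (hk' : Differentiable ℝ (deriv k))
    (hθ : Differentiable ℝ θ) (hθ' : Differentiable ℝ (deriv θ))
    (hk1 : ∀ t, k t ≠ 1)
    (haT : ∀ t, rT t * deriv (deriv θ) t + 2 * deriv rT t * deriv θ t = 0)
    (r aD : ℝ → ℝ)
    (hr : ∀ t, r t = rT t * (1 - k t))
    (haD : ∀ t, aD t = (k t * rT t) * deriv (deriv θ) t
            + 2 * deriv (fun s => k s * rT s) t * deriv θ t) :
    ∀ t, aD t = 2 * (deriv k t * r t / (1 - k t)) * deriv θ t := by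
  intro t
  have hd : deriv (fun s => k s * rT s) t = deriv k t * rT t + k t * deriv rT t :=
    deriv_mul (hk t) (hrT t)
  have h1 : (1 : ℝ) - k t ≠ 0 := sub_ne_zero.mpr (Ne.symm (hk1 t))
  have key := haT t
  rw [haD, hd, hr]
  rw [mul_div_assoc, mul_div_assoc, div_self h1, mul_one]
  linear_combination k t * key
end

section
/- The TPN system V̇_r - V_θ θ̇ = 0, V̇_θ + V_r θ̇ = λṙ₀θ̇, with θ̇ never zero, has general solution V_r(t) = A cos(θ(t) + B) + λṙ₀, V_θ(t) = -A sin(θ(t) + B) for constants A, B. -/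
/-!
With `u = (V_r - λṙ₀) - i V_θ` the system becomes the single complex equation `u' = i θ' u`,
so `u · exp (-i θ)` is constant; writing that constant in polar form `A e^{iB}` and taking real
and imaginary parts of `u = A e^{i(θ + B)}` gives the claimed solution.
-/

open Complex

theorem exists_eq_mul_exp_of_hasDerivAt_eq_mul {u f f' : ℝ → ℂ}
    (hu : ∀ t, HasDerivAt u (f' t * u t) t) (hf : ∀ t, HasDerivAt f (f' t) t) :
    ∃ K : ℂ, ∀ t, u t = K * exp (f t) := by
  have hderiv : ∀ t, HasDerivAt (fun s => u s * exp (-f s)) 0 t := fun t =>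
    ((hu t).mul (hf t).neg.cexp).congr_deriv (by simp only [Pi.neg_apply]; ring)
  refine ⟨u 0 * exp (-f 0), fun t => ?_⟩
  have hconst := is_const_of_deriv_eq_zero (fun s => (hderiv s).differentiableAt)
    (fun s => (hderiv s).deriv) t 0
  rw [← hconst, mul_assoc, ← exp_add, neg_add_cancel, exp_zero, mul_one]

theorem mul_exp_ofReal_mul_I_eq_polar (K : ℂ) (x : ℝ) :
    K * exp (x * I) = ‖K‖ * exp ((x + K.arg : ℝ) * I) := by
  conv_lhs => rw [← norm_mul_exp_arg_mul_I K]
  push_cast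
  rw [mul_assoc, ← exp_add]
  ring_nf

theorem exists_cos_sin_of_hasDerivAt_rotation {x y θ θ' : ℝ → ℝ}
    (hx : ∀ t, HasDerivAt x (y t * θ' t) t) (hy : ∀ t, HasDerivAt y (-x t * θ' t) t)
    (hθ : ∀ t, HasDerivAt θ (θ' t) t) :
    ∃ A B : ℝ, ∀ t, x t = A * Real.cos (θ t + B) ∧ y t = -A * Real.sin (θ t + B) := by
  have hu : ∀ t, HasDerivAt (fun s => (x s : ℂ) - y s * I) (θ' t * I * (x t - y t * I)) t :=
    fun t => ((hx t).ofReal_comp.sub ((hy t).ofReal_comp.mul_const I)).congr_deriv <| by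
      push_cast
      linear_combination (θ' t * y t : ℂ) * I_sq
  have hf : ∀ t, HasDerivAt (fun s => (θ s : ℂ) * I) (θ' t * I) t :=
    fun t => (hθ t).ofReal_comp.mul_const I
  obtain ⟨K, hK⟩ := exists_eq_mul_exp_of_hasDerivAt_eq_mul hu hf
  refine ⟨‖K‖, K.arg, fun t => ?_⟩
  have hpolar := (hK t).trans (mul_exp_ofReal_mul_I_eq_polar K (θ t))
  constructor
  · simpa [-ofReal_add, exp_ofReal_mul_I_re] using congrArg re hpolar
  · simpa [-ofReal_add, exp_ofReal_mul_I_im, neg_eq_iff_eq_neg] using congrArg im hpolar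

theorem tpn_system_general_solution_general
    (θ Vr Vθ : ℝ → ℝ) (lam r₀' : ℝ)
    (hθ : Differentiable ℝ θ)
    (hVr : Differentiable ℝ Vr) (hVθ : Differentiable ℝ Vθ)
    (h1 : ∀ t, deriv Vr t = Vθ t * deriv θ t)
    (h2 : ∀ t, deriv Vθ t = (lam * r₀' - Vr t) * deriv θ t) :
    ∃ A B : ℝ, ∀ t,
      Vr t = A * Real.cos (θ t + B) + lam * r₀' ∧
      Vθ t = -A * Real.sin (θ t + B) := by
  have hx : ∀ t, HasDerivAt (fun s => Vr s - lam * r₀') (Vθ t * deriv θ t) t := fun t =>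
    h1 t ▸ (hVr t).hasDerivAt.sub_const _
  have hy : ∀ t, HasDerivAt Vθ (-(Vr t - lam * r₀') * deriv θ t) t := fun t => by
    simpa [h2 t] using (hVθ t).hasDerivAt
  obtain ⟨A, B, hAB⟩ :=
    exists_cos_sin_of_hasDerivAt_rotation hx hy (fun t => (hθ t).hasDerivAt)
  exact ⟨A, B, fun t => ⟨eq_add_of_sub_eq (hAB t).1, (hAB t).2⟩⟩

theorem tpn_system_general_solution
    (θ Vr Vθ : ℝ → ℝ) (lam r₀' : ℝ)
    (hθ : Differentiable ℝ θ) (hθne : ∀ t, deriv θ t ≠ 0)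
    (hVr : Differentiable ℝ Vr) (hVθ : Differentiable ℝ Vθ)
    (h1 : ∀ t, deriv Vr t = Vθ t * deriv θ t)
    (h2 : ∀ t, deriv Vθ t = (lam * r₀' - Vr t) * deriv θ t) :
    ∃ A B : ℝ, ∀ t,
      Vr t = A * Real.cos (θ t + B) + lam * r₀' ∧
      Vθ t = -A * Real.sin (θ t + B) :=
  tpn_system_general_solution_general θ Vr Vθ lam r₀' hθ hVr hVθ h1 h2
end

section
/- If r_D : I → ℝ³ is twice differentiable with r_D(t) ≠ 0 and the radial acceleration vanishes, ⟨r̈_D, r_D⟩ = 0, then d²/dt²(‖r_D‖) = ‖r_D‖·‖Ω‖² where Ω = (r_D × ṙ_D)/‖r_D‖². -/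
open RealInnerProductSpace

noncomputable def cross3 (u v : EuclideanSpace ℝ (Fin 3)) : EuclideanSpace ℝ (Fin 3) :=
  (WithLp.equiv 2 (Fin 3 → ℝ)).symm
    ![u 1 * v 2 - u 2 * v 1, u 2 * v 0 - u 0 * v 2, u 0 * v 1 - u 1 * v 0]

/-! The radial speed of a curve `r` is `⟪r, ṙ⟫ / ‖r‖`, and what is left of the squared speed is
the tangential part `‖r‖² ‖Ω‖²`. Differentiating `‖r‖ · (d/dt)‖r‖ = ⟪r, ṙ⟫` once more gives
`‖r‖ · (d²/dt²)‖r‖ = ⟪r̈, r⟫ + ‖ṙ‖² - ((d/dt)‖r‖)²`, so when the radial acceleration `⟪r̈, r⟫`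
vanishes only the tangential term `‖r‖² ‖Ω‖²` survives. -/

section NormDeriv

variable {F : Type*} [NormedAddCommGroup F] [InnerProductSpace ℝ F]

theorem HasDerivAt.norm {f : ℝ → F} {f' : F} {x : ℝ} (hf : HasDerivAt f f' x) (h0 : f x ≠ 0) :
    HasDerivAt (‖f ·‖) (⟪f x, f'⟫ / ‖f x‖) x := by
  have hsq : ‖f x‖ ^ 2 ≠ 0 := pow_ne_zero 2 (norm_ne_zero_iff.2 h0)
  have hsqrt := hf.norm_sq.sqrt hsq
  simp only [Real.sqrt_sq (norm_nonneg _)] at hsqrt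
  convert hsqrt using 1
  field_simp

theorem norm_mul_deriv_deriv_norm {f : ℝ → F} (hf : Differentiable ℝ f)
    (hf' : Differentiable ℝ (deriv f)) (h0 : ∀ s, f s ≠ 0) (t : ℝ) :
    ‖f t‖ * deriv (deriv (‖f ·‖)) t =
      ⟪deriv (deriv f) t, f t⟫ + ‖deriv f t‖ ^ 2 - (⟪f t, deriv f t⟫ / ‖f t‖) ^ 2 := by
  have hderiv : deriv (‖f ·‖) = fun s => ⟪f s, deriv f s⟫ / ‖f s‖ :=
    funext fun s => ((hf s).hasDerivAt.norm (h0 s)).deriv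
  have hinner : HasDerivAt (fun s => ⟪f s, deriv f s⟫)
      (⟪f t, deriv (deriv f) t⟫ + ⟪deriv f t, deriv f t⟫) t :=
    (hf t).hasDerivAt.inner ℝ (hf' t).hasDerivAt
  have hnorm : ‖f t‖ ≠ 0 := norm_ne_zero_iff.2 (h0 t)
  rw [hderiv, (hinner.fun_div ((hf t).hasDerivAt.norm (h0 t)) hnorm).deriv,
    real_inner_self_eq_norm_sq, real_inner_comm (f t)]
  field_simp

end NormDeriv

theorem norm_cross3_sq (u v : EuclideanSpace ℝ (Fin 3)) :
    ‖cross3 u v‖ ^ 2 = ‖u‖ ^ 2 * ‖v‖ ^ 2 - ⟪u, v⟫ ^ 2 := by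
  simp only [← real_inner_self_eq_norm_sq, PiLp.inner_apply, RCLike.inner_apply, conj_trivial,
    Fin.sum_univ_three, cross3, WithLp.equiv_symm_apply, Matrix.cons_val_zero,
    Matrix.cons_val_one, Matrix.cons_val_two, Matrix.tail_cons, Matrix.head_cons]
  ring

theorem sq_norm_mul_sq_norm_smul_cross3 {u : EuclideanSpace ℝ (Fin 3)} (hu : u ≠ 0)
    (v : EuclideanSpace ℝ (Fin 3)) :
    ‖u‖ ^ 2 * ‖(‖u‖ ^ 2)⁻¹ • cross3 u v‖ ^ 2 = ‖v‖ ^ 2 - (⟪u, v⟫ / ‖u‖) ^ 2 := by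
  have hnorm : ‖u‖ ≠ 0 := norm_ne_zero_iff.2 hu
  rw [norm_smul, mul_pow, norm_cross3_sq, Real.norm_of_nonneg (by positivity)]
  field_simp

theorem radial_range_equation
    (rD : ℝ → EuclideanSpace ℝ (Fin 3))
    (hr : Differentiable ℝ rD) (hr' : Differentiable ℝ (deriv rD))
    (hne : ∀ t, rD t ≠ 0)
    (Ω : ℝ → EuclideanSpace ℝ (Fin 3))
    (hΩ : ∀ t, Ω t = (‖rD t‖ ^ 2)⁻¹ • cross3 (rD t) (deriv rD t))
    (hrad : ∀ t, ⟪deriv (deriv rD) t, rD t⟫ = 0) :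
    ∀ t, deriv (deriv (fun s => ‖rD s‖)) t = ‖rD t‖ * ‖Ω t‖ ^ 2 := by
  intro t
  have hsecond := norm_mul_deriv_deriv_norm hr hr' hne t
  rw [hrad t, zero_add, ← sq_norm_mul_sq_norm_smul_cross3 (hne t), ← hΩ t] at hsecond
  have hnorm : ‖rD t‖ ≠ 0 := norm_ne_zero_iff.2 (hne t)
  apply mul_left_cancel₀ hnorm
  rw [hsecond]
  ring
end
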